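/- arXiv:2501.11139 — 2 statements merged into one kernel-verified Lean document; each statement's English description precedes it below -/
import Mathlib

section
/- Let μ1 ≠ μ2 ∈ ℝ^d. Then min over probability densities q of max{KL(q ‖ p1), KL(q ‖ p2)} equals ‖μ1 − μ2‖₂²/8, where p_i is the density of N(μ_i, I_d), and the minimum is attained by the density of N((μ1+μ2)/2, I_d). -/
/-!
Write `p_ν` for the density of `N(ν, I)` and `m` for the midpoint of `μ₁, μ₂`. By Apollonius's
theorem `log p_m = (log p_{μ₁} + log p_{μ₂}) / 2 + ‖μ₁ - μ₂‖² / 8` pointwise, so for every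
density `q`
  `KL(q ‖ p_m) = (KL(q ‖ p_{μ₁}) + KL(q ‖ p_{μ₂})) / 2 - ‖μ₁ - μ₂‖² / 8`.
Gibbs' inequality `KL(q ‖ p_m) ≥ 0` bounds the average, hence the maximum, from below. For
`q = p_m` both divergences equal `‖μ₁ - μ₂‖² / 8` by the closed form
`KL(p_ν ‖ p_μ) = ‖ν - μ‖² / 2`, whose linear term integrates to zero by symmetry.
-/

open MeasureTheory Real

noncomputable def gaussianPdf {d : ℕ} (μ : EuclideanSpace ℝ (Fin d)) (x : EuclideanSpace ℝ (Fin d)) : ℝ :=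
  (2 * Real.pi) ^ (-(d : ℝ) / 2) * Real.exp (-‖x - μ‖ ^ 2 / 2)

noncomputable def klCont {d : ℕ} (q p : EuclideanSpace ℝ (Fin d) → ℝ) : ℝ :=
  ∫ x, q x * Real.log (q x / p x)

open scoped RealInnerProductSpace

section GaussianMoments

variable {V : Type*} [NormedAddCommGroup V] [InnerProductSpace ℝ V] [FiniteDimensional ℝ V]
  [MeasurableSpace V] [BorelSpace V]

theorem integrable_exp_neg_mul_sq_norm_add_inner {b : ℝ} (hb : 0 < b) (w : V) :
    Integrable fun v : V => rexp (-b * ‖v‖ ^ 2 + ⟪w, v⟫) := by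
  refine (GaussianFourier.integrable_cexp_neg_mul_sq_norm_add (b := (b : ℂ))
    (by simpa using hb) 1 w).norm.congr (.of_forall fun v => ?_)
  simp only [Complex.norm_exp]
  norm_cast
  rw [one_mul]

theorem integrable_exp_neg_mul_sq_norm_mul_inner {b : ℝ} (hb : 0 < b) (w : V) :
    Integrable fun v : V => rexp (-b * ‖v‖ ^ 2) * ⟪w, v⟫ := by
  refine ((integrable_exp_neg_mul_sq_norm_add_inner hb w).add
    (integrable_exp_neg_mul_sq_norm_add_inner hb (-w))).mono' (by fun_prop)
    (.of_forall fun v => ?_)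
  have habs : |⟪w, v⟫| ≤ rexp ⟪w, v⟫ + rexp (-⟪w, v⟫) := by
    rcases abs_choice ⟪w, v⟫ with h | h <;> rw [h] <;>
      linarith [add_one_le_exp ⟪w, v⟫, add_one_le_exp (-⟪w, v⟫), exp_pos ⟪w, v⟫,
        exp_pos (-⟪w, v⟫)]
  rw [Pi.add_apply, norm_mul, norm_of_nonneg (exp_pos _).le, norm_eq_abs, inner_neg_left, exp_add,
    exp_add, ← mul_add]
  gcongr

end GaussianMoments

theorem sub_le_mul_log_div {q p : ℝ} (hq : 0 ≤ q) (hp : 0 < p) : q - p ≤ q * log (q / p) := by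
  rcases hq.eq_or_lt with rfl | hq
  · simpa using hp.le
  · have h := one_sub_inv_le_log_of_pos (div_pos hq hp)
    rw [inv_div] at h
    calc q - p = q * (1 - p / q) := by field_simp
      _ ≤ q * log (q / p) := by gcongr

theorem integral_mul_log_div_nonneg {α : Type*} [MeasurableSpace α] {μ : Measure α}
    {q p : α → ℝ} (hq : ∀ x, 0 ≤ q x) (hp : ∀ x, 0 < p x) (hqi : Integrable q μ)
    (hpi : Integrable p μ) (hpq : ∫ x, p x ∂μ ≤ ∫ x, q x ∂μ)
    (h : Integrable (fun x => q x * log (q x / p x)) μ) :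
    0 ≤ ∫ x, q x * log (q x / p x) ∂μ := by
  have h' : ∫ x, (q x - p x) ∂μ ≤ ∫ x, q x * log (q x / p x) ∂μ :=
    integral_mono (hqi.sub hpi) h fun x => sub_le_mul_log_div (hq x) (hp x)
  rw [integral_sub hqi hpi] at h'
  linarith

section gaussianPdf

variable {d : ℕ}

local notation "E" => EuclideanSpace ℝ (Fin d)

theorem gaussianPdf_pos (μ x : E) : 0 < gaussianPdf μ x := by
  unfold gaussianPdf; positivity

theorem gaussianPdf_eq (μ x : E) :
    gaussianPdf μ x = (2 * π) ^ (-(d : ℝ) / 2) * rexp (-(1 / 2) * ‖x - μ‖ ^ 2) := by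
  unfold gaussianPdf; ring_nf

theorem log_gaussianPdf (μ x : E) :
    log (gaussianPdf μ x) = -(d / 2) * log (2 * π) - ‖x - μ‖ ^ 2 / 2 := by
  rw [gaussianPdf, log_mul (by positivity) (exp_pos _).ne', log_rpow (by positivity), log_exp]
  ring

theorem integral_gaussianPdf (μ : E) : ∫ x, gaussianPdf μ x = 1 := by
  simp_rw [gaussianPdf_eq]
  rw [integral_const_mul,
    integral_sub_right_eq_self (fun y : E => rexp (-(1 / 2) * ‖y‖ ^ 2)) μ,
    GaussianFourier.integral_rexp_neg_mul_sq_norm (by norm_num : (0 : ℝ) < 1 / 2),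
    finrank_euclideanSpace_fin]
  rw [div_div_eq_mul_div, div_one, mul_comm π, ← rpow_add (by positivity), neg_div,
    neg_add_cancel, rpow_zero]

theorem integrable_gaussianPdf (μ : E) : Integrable (gaussianPdf μ) :=
  .of_integral_ne_zero (by simp [integral_gaussianPdf μ])

theorem integrable_gaussianPdf_mul_inner (μ w : E) :
    Integrable fun x => gaussianPdf μ x * ⟪x - μ, w⟫ := by
  refine (((integrable_exp_neg_mul_sq_norm_mul_inner (by norm_num : (0 : ℝ) < 1 / 2)
    w).comp_sub_right μ).const_mul ((2 * π) ^ (-(d : ℝ) / 2))).congr (.of_forall fun x => ?_)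
  simp only [gaussianPdf_eq, real_inner_comm w]
  ring

theorem integral_gaussianPdf_mul_inner (μ w : E) :
    ∫ x, gaussianPdf μ x * ⟪x - μ, w⟫ = 0 := by
  -- the integrand is odd under the reflection `x ↦ 2μ - x`
  have h := integral_sub_left_eq_self (fun x => gaussianPdf μ x * ⟪x - μ, w⟫) volume (μ + μ)
  have hodd : ∀ x : E, (μ + μ - x) - μ = -(x - μ) := fun x => by abel
  simp only [hodd, gaussianPdf, norm_neg, inner_neg_left, mul_neg, integral_neg] at h
  unfold gaussianPdf
  linarith

theorem klCont_gaussianPdf (ν μ : E) :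
    klCont (gaussianPdf ν) (gaussianPdf μ) = ‖ν - μ‖ ^ 2 / 2 := by
  have hpt : ∀ x, gaussianPdf ν x * log (gaussianPdf ν x / gaussianPdf μ x)
      = gaussianPdf ν x * ⟪x - ν, ν - μ⟫ + ‖ν - μ‖ ^ 2 / 2 * gaussianPdf ν x := by
    intro x
    rw [log_div (gaussianPdf_pos ν x).ne' (gaussianPdf_pos μ x).ne', log_gaussianPdf,
      log_gaussianPdf, show x - μ = (x - ν) + (ν - μ) by abel, norm_add_sq_real]
    ring
  rw [klCont, funext hpt, integral_add (integrable_gaussianPdf_mul_inner ν _)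
    ((integrable_gaussianPdf ν).const_mul _), integral_gaussianPdf_mul_inner, integral_const_mul,
    integral_gaussianPdf]
  ring

theorem mul_log_div_gaussianPdf_midpoint (μ₁ μ₂ x : E) (q : ℝ) :
    q * log (q / gaussianPdf (midpoint ℝ μ₁ μ₂) x)
      = (q * log (q / gaussianPdf μ₁ x) + q * log (q / gaussianPdf μ₂ x)) / 2
        - ‖μ₁ - μ₂‖ ^ 2 / 8 * q := by
  rcases eq_or_ne q 0 with rfl | hq
  · simp
  have apollonius :=
    EuclideanGeometry.dist_sq_add_dist_sq_eq_two_mul_dist_midpoint_sq_add_half_dist_sq x μ₁ μ₂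
  simp only [dist_eq_norm] at apollonius
  simp only [log_div hq (gaussianPdf_pos _ x).ne', log_gaussianPdf]
  linear_combination -q / 4 * apollonius

theorem integrable_mul_log_div_gaussianPdf_midpoint {q : E → ℝ} {μ₁ μ₂ : E}
    (hq : Integrable q)
    (h₁ : Integrable fun x => q x * log (q x / gaussianPdf μ₁ x))
    (h₂ : Integrable fun x => q x * log (q x / gaussianPdf μ₂ x)) :
    Integrable fun x => q x * log (q x / gaussianPdf (midpoint ℝ μ₁ μ₂) x) := by
  simp_rw [mul_log_div_gaussianPdf_midpoint]
  exact ((h₁.add h₂).div_const 2).sub (hq.const_mul _)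

theorem klCont_gaussianPdf_midpoint {q : E → ℝ} {μ₁ μ₂ : E} (hq : Integrable q)
    (hq₁ : ∫ x, q x = 1)
    (h₁ : Integrable fun x => q x * log (q x / gaussianPdf μ₁ x))
    (h₂ : Integrable fun x => q x * log (q x / gaussianPdf μ₂ x)) :
    klCont q (gaussianPdf (midpoint ℝ μ₁ μ₂))
      = (klCont q (gaussianPdf μ₁) + klCont q (gaussianPdf μ₂)) / 2
        - ‖μ₁ - μ₂‖ ^ 2 / 8 := by
  have h₁₂ : Integrable fun x => (q x * log (q x / gaussianPdf μ₁ x)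
      + q x * log (q x / gaussianPdf μ₂ x)) / 2 := (h₁.add h₂).div_const 2
  simp_rw [klCont, mul_log_div_gaussianPdf_midpoint]
  rw [integral_sub h₁₂ (hq.const_mul _), integral_div, integral_add h₁ h₂,
    integral_const_mul, hq₁, mul_one]

end gaussianPdf

theorem gaussian_minimax_kl_general {d : ℕ} (μ1 μ2 : EuclideanSpace ℝ (Fin d)) :
    (∀ q : EuclideanSpace ℝ (Fin d) → ℝ, (∀ x, 0 ≤ q x) → (∫ x, q x) = 1 →
      Integrable (fun x => q x * Real.log (q x / gaussianPdf μ1 x)) →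
      Integrable (fun x => q x * Real.log (q x / gaussianPdf μ2 x)) →
      ‖μ1 - μ2‖ ^ 2 / 8 ≤ max (klCont q (gaussianPdf μ1)) (klCont q (gaussianPdf μ2))) ∧
    max (klCont (gaussianPdf ((1 / 2 : ℝ) • (μ1 + μ2))) (gaussianPdf μ1))
        (klCont (gaussianPdf ((1 / 2 : ℝ) • (μ1 + μ2))) (gaussianPdf μ2))
      = ‖μ1 - μ2‖ ^ 2 / 8 := by
  rw [show (1 / 2 : ℝ) • (μ1 + μ2) = midpoint ℝ μ1 μ2 by
    rw [midpoint_eq_smul_add, invOf_eq_inv, one_div]]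
  refine ⟨fun q hq0 hq1 h₁ h₂ => ?_, ?_⟩
  · have hq : Integrable q := .of_integral_ne_zero (by simp [hq1])
    have gibbs : 0 ≤ klCont q (gaussianPdf (midpoint ℝ μ1 μ2)) :=
      integral_mul_log_div_nonneg hq0 (gaussianPdf_pos _) hq (integrable_gaussianPdf _)
        (by rw [hq1, integral_gaussianPdf])
        (integrable_mul_log_div_gaussianPdf_midpoint hq h₁ h₂)
    rw [klCont_gaussianPdf_midpoint hq hq1 h₁ h₂] at gibbs
    linarith [le_max_left (klCont q (gaussianPdf μ1)) (klCont q (gaussianPdf μ2)),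
      le_max_right (klCont q (gaussianPdf μ1)) (klCont q (gaussianPdf μ2))]
  · simp only [klCont_gaussianPdf, ← dist_eq_norm, dist_midpoint_left, dist_midpoint_right,
      max_self, Real.norm_two]
    ring

/-- The minimum over probability densities `q` of `max{KL(q‖p1), KL(q‖p2)}` equals
`‖μ1 − μ2‖²/8`, attained by the density of `N((μ1+μ2)/2, I_d)`. -/
theorem gaussian_minimax_kl {d : ℕ} (μ1 μ2 : EuclideanSpace ℝ (Fin d)) (hne : μ1 ≠ μ2) :
    (∀ q : EuclideanSpace ℝ (Fin d) → ℝ, (∀ x, 0 ≤ q x) → (∫ x, q x) = 1 →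
      Integrable (fun x => q x * Real.log (q x / gaussianPdf μ1 x)) →
      Integrable (fun x => q x * Real.log (q x / gaussianPdf μ2 x)) →
      ‖μ1 - μ2‖ ^ 2 / 8 ≤ max (klCont q (gaussianPdf μ1)) (klCont q (gaussianPdf μ2))) ∧
    max (klCont (gaussianPdf ((1 / 2 : ℝ) • (μ1 + μ2))) (gaussianPdf μ1))
        (klCont (gaussianPdf ((1 / 2 : ℝ) • (μ1 + μ2))) (gaussianPdf μ2))
      = ‖μ1 - μ2‖ ^ 2 / 8 :=
  gaussian_minimax_kl_general μ1 μ2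
end

section
/- Let p, q be strictly positive probability vectors on {0,1,…,L} with p ≠ q. Then min over probability vectors r of max{KL(r ‖ p), KL(r ‖ q)} equals max_{t ∈ [0,1]} (−log Σ_l p_l^{1−t} q_l^t), the Chernoff information between p and q. -/
/-! Write `Z t = ∑ l, p l ^ (1 - t) * q l ^ t`. For `t ∈ [0, 1]` and any probability vector `r`,
Gibbs' inequality for the positive weights `p ^ (1 - t) * q ^ t` gives
`-log Z t ≤ KL(r ‖ p ^ (1 - t) q ^ t) = (1 - t) KL(r ‖ p) + t KL(r ‖ q) ≤ max (KL(r ‖ p)) (KL(r ‖ q))`,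
so every Chernoff value lies below every minimax value.

For the converse take a maximiser `t₀` of `-log Z` on `[0, 1]` and the tilted vector
`r = p ^ (1 - t₀) q ^ t₀ / Z t₀`, for which the middle term equals `-log Z t₀`. The derivative of
`log Z` at `t₀` is `D = KL(r ‖ p) - KL(r ‖ q)`, and first-order optimality on `[0, 1]` gives
`t₀ D ≤ 0 ≤ (1 - t₀) D`. Since `KL(r ‖ p) = -log Z t₀ + t₀ D` and
`KL(r ‖ q) = -log Z t₀ - (1 - t₀) D`, both divergences are at most `-log Z t₀`. -/

open Real

noncomputable def klDisc {m : ℕ} (r p : Fin m → ℝ) : ℝ :=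
  ∑ l, r l * Real.log (r l / p l)

open Finset InformationTheory

lemma mul_log_div_eq_sub {r a : ℝ} (ha : 0 < a) : r * log (r / a) = r * log r - r * log a := by
  rcases eq_or_ne r 0 with rfl | hr
  · simp
  · rw [log_div hr ha.ne', mul_sub]

lemma sub_le_mul_log_div_s13 {r a : ℝ} (hr : 0 ≤ r) (ha : 0 < a) : r - a ≤ r * log (r / a) := by
  have h := mul_nonneg ha.le (klFun_nonneg (div_nonneg hr ha.le))
  have hexp : a * klFun (r / a) = r * log (r / a) + a - r := by
    rw [klFun_apply]; field_simp
  linarith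

lemma klDisc_eq_sum_sub {m : ℕ} (r : Fin m → ℝ) {p : Fin m → ℝ} (hp : ∀ l, 0 < p l) :
    klDisc r p = ∑ l, (r l * log (r l) - r l * log (p l)) :=
  sum_congr rfl fun l _ => mul_log_div_eq_sub (hp l)

lemma neg_log_sum_le_klDisc {m : ℕ} {r u : Fin m → ℝ} (hr : ∀ l, 0 ≤ r l)
    (hr1 : ∑ l, r l = 1) (hu : ∀ l, 0 < u l) : -log (∑ l, u l) ≤ klDisc r u := by
  set S := ∑ l, u l
  have hne : (univ : Finset (Fin m)).Nonempty :=
    nonempty_of_sum_ne_zero (by rw [hr1]; exact one_ne_zero)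
  have hS : 0 < S := sum_pos (fun l _ => hu l) hne
  have hu' : ∀ l, 0 < u l / S := fun l => div_pos (hu l) hS
  have hsplit : ∑ l, r l * log (r l / (u l / S)) = klDisc r u + log S := by
    rw [klDisc, ← mul_one (log S), ← hr1, mul_sum, ← sum_add_distrib]
    refine sum_congr rfl fun l _ => ?_
    rw [mul_log_div_eq_sub (hu' l), mul_log_div_eq_sub (hu l), log_div (hu l).ne' hS.ne']
    ring
  have hzero : ∑ l, (r l - u l / S) = 0 := by
    rw [sum_sub_distrib, ← sum_div, hr1, div_self hS.ne', sub_self]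
  have hpointwise := sum_le_sum fun l (_ : l ∈ univ) => sub_le_mul_log_div_s13 (hr l) (hu' l)
  linarith

lemma IsMaxOn.hasDerivAt_mul_sub_nonpos {f : ℝ → ℝ} {s : Set ℝ} {a b f' : ℝ}
    (h : IsMaxOn f s a) (hs : Convex ℝ s) (ha : a ∈ s) (hb : b ∈ s) (hf : HasDerivAt f f' a) :
    f' * (b - a) ≤ 0 := by
  have := h.localize.hasFDerivWithinAt_nonpos hf.hasFDerivAt.hasFDerivWithinAt
    (sub_mem_posTangentConeAt_of_segment_subset (hs.segment_subset ha hb))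
  simpa [mul_comm] using this

section GeometricMixture

variable {m : ℕ}

noncomputable def geomMix (p q : Fin m → ℝ) (t : ℝ) : Fin m → ℝ :=
  fun l => p l ^ (1 - t) * q l ^ t

noncomputable def tilted (p q : Fin m → ℝ) (t : ℝ) : Fin m → ℝ :=
  fun l => geomMix p q t l / ∑ k, geomMix p q t k

variable {p q : Fin m → ℝ}

lemma geomMix_pos (hp : ∀ l, 0 < p l) (hq : ∀ l, 0 < q l) (t : ℝ) (l : Fin m) :
    0 < geomMix p q t l :=
  mul_pos (rpow_pos_of_pos (hp l) _) (rpow_pos_of_pos (hq l) _)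

lemma log_geomMix (hp : ∀ l, 0 < p l) (hq : ∀ l, 0 < q l) (t : ℝ) (l : Fin m) :
    log (geomMix p q t l) = (1 - t) * log (p l) + t * log (q l) := by
  rw [geomMix, log_mul (rpow_pos_of_pos (hp l) _).ne' (rpow_pos_of_pos (hq l) _).ne',
    log_rpow (hp l), log_rpow (hq l)]

lemma sum_geomMix_pos [NeZero m] (hp : ∀ l, 0 < p l) (hq : ∀ l, 0 < q l) (t : ℝ) :
    0 < ∑ l, geomMix p q t l :=
  sum_pos (fun l _ => geomMix_pos hp hq t l) univ_nonempty

lemma tilted_nonneg (hp : ∀ l, 0 < p l) (hq : ∀ l, 0 < q l) (t : ℝ) (l : Fin m) :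
    0 ≤ tilted p q t l :=
  div_nonneg (geomMix_pos hp hq t l).le (sum_nonneg fun k _ => (geomMix_pos hp hq t k).le)

lemma sum_tilted [NeZero m] (hp : ∀ l, 0 < p l) (hq : ∀ l, 0 < q l) (t : ℝ) :
    ∑ l, tilted p q t l = 1 := by
  unfold tilted
  rw [← sum_div, div_self (sum_geomMix_pos hp hq t).ne']

lemma klDisc_geomMix (r : Fin m → ℝ) (hp : ∀ l, 0 < p l) (hq : ∀ l, 0 < q l) (t : ℝ) :
    klDisc r (geomMix p q t) = (1 - t) * klDisc r p + t * klDisc r q := by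
  rw [klDisc_eq_sum_sub r (geomMix_pos hp hq t), klDisc_eq_sum_sub r hp,
    klDisc_eq_sum_sub r hq, mul_sum, mul_sum, ← sum_add_distrib]
  refine sum_congr rfl fun l _ => ?_
  rw [log_geomMix hp hq]
  ring

lemma klDisc_sub_klDisc (r : Fin m → ℝ) (hp : ∀ l, 0 < p l) (hq : ∀ l, 0 < q l) :
    klDisc r p - klDisc r q = ∑ l, r l * (log (q l) - log (p l)) := by
  rw [klDisc_eq_sum_sub r hp, klDisc_eq_sum_sub r hq, ← sum_sub_distrib]
  refine sum_congr rfl fun l _ => ?_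
  ring

lemma klDisc_tilted_geomMix [NeZero m] (hp : ∀ l, 0 < p l) (hq : ∀ l, 0 < q l) (t : ℝ) :
    klDisc (tilted p q t) (geomMix p q t) = -log (∑ l, geomMix p q t l) := by
  have hlog : ∀ l, log (tilted p q t l / geomMix p q t l) = -log (∑ k, geomMix p q t k) := by
    intro l
    rw [tilted, div_div_cancel_left' (geomMix_pos hp hq t l).ne', log_inv]
  simp only [klDisc, hlog, ← sum_mul, sum_tilted hp hq, one_mul]

lemma neg_log_sum_geomMix_le_max {r : Fin m → ℝ} (hr : ∀ l, 0 ≤ r l) (hr1 : ∑ l, r l = 1)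
    (hp : ∀ l, 0 < p l) (hq : ∀ l, 0 < q l) {t : ℝ} (ht : t ∈ Set.Icc (0 : ℝ) 1) :
    -log (∑ l, geomMix p q t l) ≤ max (klDisc r p) (klDisc r q) :=
  calc -log (∑ l, geomMix p q t l) ≤ klDisc r (geomMix p q t) :=
        neg_log_sum_le_klDisc hr hr1 (geomMix_pos hp hq t)
    _ = (1 - t) * klDisc r p + t * klDisc r q := klDisc_geomMix r hp hq t
    _ ≤ (1 - t) * max (klDisc r p) (klDisc r q) + t * max (klDisc r p) (klDisc r q) :=
        add_le_add (mul_le_mul_of_nonneg_left (le_max_left _ _) (sub_nonneg.2 ht.2))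
          (mul_le_mul_of_nonneg_left (le_max_right _ _) ht.1)
    _ = max (klDisc r p) (klDisc r q) := by ring

lemma hasDerivAt_geomMix (hp : ∀ l, 0 < p l) (hq : ∀ l, 0 < q l) (t : ℝ) (l : Fin m) :
    HasDerivAt (fun s => geomMix p q s l) (geomMix p q t l * (log (q l) - log (p l))) t := by
  have hpPow := ((hasDerivAt_id t).const_sub 1).const_rpow (hp l)
  have hqPow := (hasDerivAt_id t).const_rpow (hq l)
  refine (hpPow.fun_mul hqPow).congr_deriv ?_
  simp only [geomMix, id]
  ring

lemma hasDerivAt_log_sum_geomMix [NeZero m] (hp : ∀ l, 0 < p l) (hq : ∀ l, 0 < q l) (t : ℝ) :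
    HasDerivAt (fun s => log (∑ l, geomMix p q s l))
      (klDisc (tilted p q t) p - klDisc (tilted p q t) q) t := by
  have hsum := HasDerivAt.fun_sum fun l (_ : l ∈ univ) => hasDerivAt_geomMix hp hq t l
  convert hsum.log (sum_geomMix_pos hp hq t).ne' using 1
  simp only [klDisc_sub_klDisc _ hp hq, tilted, sum_div]
  refine sum_congr rfl fun l _ => ?_
  ring

lemma max_klDisc_tilted_le_of_isMaxOn [NeZero m] (hp : ∀ l, 0 < p l) (hq : ∀ l, 0 < q l)
    {t₀ : ℝ} (ht₀ : t₀ ∈ Set.Icc (0 : ℝ) 1)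
    (hmax : IsMaxOn (fun t => -log (∑ l, geomMix p q t l)) (Set.Icc 0 1) t₀) :
    max (klDisc (tilted p q t₀) p) (klDisc (tilted p q t₀) q)
      ≤ -log (∑ l, geomMix p q t₀ l) := by
  have hderiv := (hasDerivAt_log_sum_geomMix hp hq t₀).neg
  have hleft := hmax.hasDerivAt_mul_sub_nonpos (convex_Icc 0 1) ht₀
    (Set.left_mem_Icc.2 zero_le_one) hderiv
  have hright := hmax.hasDerivAt_mul_sub_nonpos (convex_Icc 0 1) ht₀
    (Set.right_mem_Icc.2 zero_le_one) hderiv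
  have hmix := klDisc_geomMix (tilted p q t₀) hp hq t₀
  rw [klDisc_tilted_geomMix hp hq] at hmix
  refine max_le ?_ ?_ <;> linarith

end GeometricMixture

theorem minimax_kl_eq_chernoff_general {L : ℕ} (p q : Fin (L + 1) → ℝ)
    (hp : ∀ l, 0 < p l) (hq : ∀ l, 0 < q l) :
    sInf {x : ℝ | ∃ r : Fin (L + 1) → ℝ, (∀ l, 0 ≤ r l) ∧ (∑ l, r l = 1) ∧
        x = max (klDisc r p) (klDisc r q)}
      = sSup {x : ℝ | ∃ t ∈ Set.Icc (0 : ℝ) 1,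
          x = -Real.log (∑ l, p l ^ (1 - t) * q l ^ t)} := by
  set chernoff : ℝ → ℝ := fun t => -log (∑ l, geomMix p q t l)
  have hcont : Continuous chernoff := continuous_iff_continuousAt.2 fun t =>
    (hasDerivAt_log_sum_geomMix hp hq t).continuousAt.neg
  obtain ⟨t₀, ht₀, hmax⟩ :=
    isCompact_Icc.exists_isMaxOn (Set.nonempty_Icc.2 zero_le_one) hcont.continuousOn
  have hleast : IsLeast {x : ℝ | ∃ r : Fin (L + 1) → ℝ, (∀ l, 0 ≤ r l) ∧ (∑ l, r l = 1) ∧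
      x = max (klDisc r p) (klDisc r q)} (chernoff t₀) := by
    refine ⟨⟨tilted p q t₀, tilted_nonneg hp hq t₀, sum_tilted hp hq t₀, ?_⟩, ?_⟩
    · exact le_antisymm (neg_log_sum_geomMix_le_max (tilted_nonneg hp hq t₀)
        (sum_tilted hp hq t₀) hp hq ht₀) (max_klDisc_tilted_le_of_isMaxOn hp hq ht₀ hmax)
    · rintro _ ⟨r, hr, hr1, rfl⟩
      exact neg_log_sum_geomMix_le_max hr hr1 hp hq ht₀
  have hgreatest : IsGreatest {x : ℝ | ∃ t ∈ Set.Icc (0 : ℝ) 1,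
      x = -Real.log (∑ l, p l ^ (1 - t) * q l ^ t)} (chernoff t₀) :=
    ⟨⟨t₀, ht₀, rfl⟩, by rintro _ ⟨t, ht, rfl⟩; exact hmax ht⟩
  rw [hleast.csInf_eq, hgreatest.csSup_eq]

/-- `min_r max{KL(r‖p), KL(r‖q)}` over probability vectors `r` equals the Chernoff
information `max_{t∈[0,1]} (−log Σ_l p_l^{1−t} q_l^t)`. -/
theorem minimax_kl_eq_chernoff {L : ℕ} (p q : Fin (L + 1) → ℝ)
    (hp : ∀ l, 0 < p l) (hq : ∀ l, 0 < q l)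
    (hp1 : ∑ l, p l = 1) (hq1 : ∑ l, q l = 1) (hne : p ≠ q) :
    sInf {x : ℝ | ∃ r : Fin (L + 1) → ℝ, (∀ l, 0 ≤ r l) ∧ (∑ l, r l = 1) ∧
        x = max (klDisc r p) (klDisc r q)}
      = sSup {x : ℝ | ∃ t ∈ Set.Icc (0 : ℝ) 1,
          x = -Real.log (∑ l, p l ^ (1 - t) * q l ^ t)} :=
  minimax_kl_eq_chernoff_general p q hp hq
end
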